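/- Value equivalence between the POSG and derived POMDP (finite-horizon, two-agent): for any planning-agent policy π_i, any horizon T, and any history h_{i,t} with t ≤ T, the T-step value function of π_i in the POSG — defined as the expected discounted sum of rewards under the belief over (state, other-agent policy, other-agent history) triples — equals the T-step value function of π_i in the derived POMDP whose states are history-policy-states with transition T̄, observation Z̄, and reward R̄(w, a_i) = Σ_{a₋ᵢ} π₋ᵢ(a₋ᵢ|w.h₋ᵢ) R_i(w.s, ⟨a_i, a₋ᵢ⟩). -/
import Mathlib


open Finset

section ValueEquivalence

variable {S Ai An Oi On P : Type*}
variable [Fintype S] [Fintype Ai] [Fintype An] [Fintype Oi] [Fintype On] [Fintype P]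
variable [DecidableEq S] [DecidableEq P] [DecidableEq An] [DecidableEq On]

/-- Derived POMDP reward: `R̄(w, aᵢ) = Σ_{a₋ᵢ} π₋ᵢ(a₋ᵢ | w.h₋ᵢ) Rᵢ(w.s, ⟨aᵢ, a₋ᵢ⟩)`.
A history-policy-state of time `t` is a triple of a state, a policy (from `P`,
interpreted via `pol`), and an other-agent history `Fin t → An × On`. -/
noncomputable def Rbar (pol : P → (t : ℕ) → (Fin t → An × On) → An → ℝ)
    (Ri : S → Ai → An → ℝ) {t : ℕ} (w : S × P × (Fin t → An × On)) (ai : Ai) : ℝ :=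
  ∑ an : An, pol w.2.1 t w.2.2 an * Ri w.1 ai an

/-- Derived POMDP transition: nonzero only when `w'` keeps the policy component and
extends the other-agent history by one action-observation pair, in which case it is
`π₋ᵢ(a₋ᵢ|h₋ᵢ) ⋅ T(s, ⟨aᵢ, a₋ᵢ⟩, s') ⋅ Z₋ᵢ(s', ⟨aᵢ, a₋ᵢ⟩, o₋ᵢ)`. -/
noncomputable def Tbar (pol : P → (t : ℕ) → (Fin t → An × On) → An → ℝ)
    (T : S → Ai → An → S → ℝ) (Zn : S → Ai → An → On → ℝ)
    {t : ℕ} (w : S × P × (Fin t → An × On)) (ai : Ai)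
    (w' : S × P × (Fin (t + 1) → An × On)) : ℝ :=
  if w'.2.1 = w.2.1 ∧ Fin.init w'.2.2 = w.2.2 then
    pol w.2.1 t w.2.2 (w'.2.2 (Fin.last t)).1 *
      T w.1 ai (w'.2.2 (Fin.last t)).1 w'.1 *
      Zn w'.1 ai (w'.2.2 (Fin.last t)).1 (w'.2.2 (Fin.last t)).2
  else 0

/-- Derived POMDP observation function: `Z̄(w', aᵢ, oᵢ) = Zᵢ(w'.s, ⟨aᵢ, w'.a₋ᵢ⟩, oᵢ)`
where `w'.a₋ᵢ` is the last other-agent action recorded in `w'`. -/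
noncomputable def Zbar (Zi : S → Ai → An → Oi → ℝ)
    {t : ℕ} (w' : S × P × (Fin (t + 1) → An × On)) (ai : Ai) (oi : Oi) : ℝ :=
  Zi w'.1 ai (w'.2.2 (Fin.last t)).1 oi

/-- `n`-step POSG value of policy `πi` from agent-`i` history `hi`, defined by the
Bellman backup with belief `b` over (state, other-agent policy, other-agent history)
triples, by backward induction from the horizon where the value is `0`. -/
noncomputable def Vposg (γ : ℝ)
    (b : (hi : List (Ai × Oi)) → S × P × (Fin hi.length → An × On) → ℝ)
    (πi : List (Ai × Oi) → Ai → ℝ)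
    (pol : P → (t : ℕ) → (Fin t → An × On) → An → ℝ)
    (Ri : S → Ai → An → ℝ) (T : S → Ai → An → S → ℝ)
    (Zi : S → Ai → An → Oi → ℝ) :
    ℕ → List (Ai × Oi) → ℝ
  | 0, _ => 0
  | n + 1, hi =>
      ∑ w : S × P × (Fin hi.length → An × On),
        b hi w * ∑ ai : Ai, πi hi ai * ∑ an : An, pol w.2.1 hi.length w.2.2 an *
          (Ri w.1 ai an + γ * ∑ s' : S, T w.1 ai an s' * ∑ oi : Oi,
            Zi s' ai an oi * Vposg γ b πi pol Ri T Zi n (hi ++ [(ai, oi)]))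

/-- `n`-step value of policy `πi` in the derived POMDP whose states are
history-policy-states, with transition `Tbar`, observation `Zbar` and reward `Rbar`,
defined by the Bellman backup with the same belief `b`. -/
noncomputable def Vpomdp (γ : ℝ)
    (b : (hi : List (Ai × Oi)) → S × P × (Fin hi.length → An × On) → ℝ)
    (πi : List (Ai × Oi) → Ai → ℝ)
    (pol : P → (t : ℕ) → (Fin t → An × On) → An → ℝ)
    (Ri : S → Ai → An → ℝ) (T : S → Ai → An → S → ℝ)
    (Zi : S → Ai → An → Oi → ℝ) (Zn : S → Ai → An → On → ℝ) :
    ℕ → List (Ai × Oi) → ℝ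
  | 0, _ => 0
  | n + 1, hi =>
      ∑ w : S × P × (Fin hi.length → An × On),
        b hi w * ∑ ai : Ai, πi hi ai *
          (Rbar pol Ri w ai + γ *
            ∑ w' : S × P × (Fin (hi.length + 1) → An × On),
              Tbar pol T Zn w ai w' * ∑ oi : Oi,
                Zbar Zi w' ai oi * Vpomdp γ b πi pol Ri T Zi Zn n (hi ++ [(ai, oi)]))

lemma sum_Tbar_mul (pol : P → (t : ℕ) → (Fin t → An × On) → An → ℝ)
    (T : S → Ai → An → S → ℝ) (Zn : S → Ai → An → On → ℝ)
    {t : ℕ} (w : S × P × (Fin t → An × On)) (ai : Ai)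
    (F : S × P × (Fin (t + 1) → An × On) → ℝ) :
    ∑ w', Tbar pol T Zn w ai w' * F w' =
      ∑ an : An, ∑ o : On, ∑ s' : S,
        pol w.2.1 t w.2.2 an * T w.1 ai an s' * Zn s' ai an o *
          F (s', w.2.1, Fin.snoc w.2.2 (an, o)) := by
  rw [Fintype.sum_prod_type]
  have key : ∀ s' : S,
      (∑ y : P × (Fin (t + 1) → An × On), Tbar pol T Zn w ai (s', y) * F (s', y))
      = ∑ x : An × On, pol w.2.1 t w.2.2 x.1 * T w.1 ai x.1 s' * Zn s' ai x.1 x.2 *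
          F (s', w.2.1, Fin.snoc w.2.2 x) := by
    intro s'
    rw [Fintype.sum_prod_type]
    rw [Finset.sum_eq_single w.2.1]
    · rw [← Equiv.sum_comp (Fin.snocEquiv (fun _ : Fin (t+1) => An × On))
        (fun g => Tbar pol T Zn w ai (s', w.2.1, g) * F (s', w.2.1, g))]
      rw [Fintype.sum_prod_type]
      refine Finset.sum_congr rfl fun x _ => ?_
      rw [Finset.sum_eq_single w.2.2]
      · simp [Tbar, Fin.snocEquiv, Fin.init_snoc, Fin.snoc_last]
      · intro g0 _ hg0
        simp [Tbar, Fin.snocEquiv, Fin.init_snoc, hg0]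
      · simp
    · intro p _ hp
      simp [Tbar, hp]
    · simp
  simp only [key]
  rw [Finset.sum_comm]
  rw [Fintype.sum_prod_type]

/-- Value equivalence between the POSG and the derived POMDP: for any planning-agent
policy, horizon, and agent-`i` history, the two `n`-step value functions coincide,
provided the other-agent observation kernel is normalized. -/
theorem posg_pomdp_value_equivalence (γ : ℝ)
    (b : (hi : List (Ai × Oi)) → S × P × (Fin hi.length → An × On) → ℝ)
    (πi : List (Ai × Oi) → Ai → ℝ)
    (pol : P → (t : ℕ) → (Fin t → An × On) → An → ℝ)
    (Ri : S → Ai → An → ℝ) (T : S → Ai → An → S → ℝ)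
    (Zi : S → Ai → An → Oi → ℝ) (Zn : S → Ai → An → On → ℝ)
    (hZn : ∀ s' ai an, ∑ o : On, Zn s' ai an o = 1) :
    ∀ (n : ℕ) (hi : List (Ai × Oi)),
      Vposg γ b πi pol Ri T Zi n hi = Vpomdp γ b πi pol Ri T Zi Zn n hi := by
  intro n
  induction n with
  | zero => intro hi; rfl
  | succ n ih =>
    intro hi
    simp only [Vposg, Vpomdp]
    refine Finset.sum_congr rfl fun w _ => ?_
    congr 1
    refine Finset.sum_congr rfl fun ai _ => ?_
    congr 1
    rw [sum_Tbar_mul]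
    simp only [Zbar, Fin.snoc_last, ih, Rbar]
    have hcollapse : ∀ an : An,
        (∑ o : On, ∑ s' : S, pol w.2.1 hi.length w.2.2 an * T w.1 ai an s' *
            Zn s' ai an o * ∑ oi : Oi, Zi s' ai an oi *
              Vpomdp γ b πi pol Ri T Zi Zn n (hi ++ [(ai, oi)]))
        = ∑ s' : S, pol w.2.1 hi.length w.2.2 an * (T w.1 ai an s' *
            ∑ oi : Oi, Zi s' ai an oi *
              Vpomdp γ b πi pol Ri T Zi Zn n (hi ++ [(ai, oi)])) := by
      intro an
      rw [Finset.sum_comm]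
      refine Finset.sum_congr rfl fun s' _ => ?_
      have h1 : (∑ o : On, pol w.2.1 hi.length w.2.2 an * T w.1 ai an s' *
            Zn s' ai an o * ∑ oi : Oi, Zi s' ai an oi *
              Vpomdp γ b πi pol Ri T Zi Zn n (hi ++ [(ai, oi)]))
          = (pol w.2.1 hi.length w.2.2 an * (T w.1 ai an s' *
            ∑ oi : Oi, Zi s' ai an oi *
              Vpomdp γ b πi pol Ri T Zi Zn n (hi ++ [(ai, oi)]))) *
            ∑ o : On, Zn s' ai an o := by
        rw [Finset.mul_sum]
        exact Finset.sum_congr rfl fun o _ => by ring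
      rw [h1, hZn, mul_one]
    simp only [hcollapse]
    rw [Finset.mul_sum, ← Finset.sum_add_distrib]
    refine Finset.sum_congr rfl fun an _ => ?_
    rw [mul_add]
    congr 1
    simp only [Finset.mul_sum]
    exact Finset.sum_congr rfl fun s' _ => Finset.sum_congr rfl fun oi _ => by ring

end ValueEquivalence
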